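/- arXiv:2411.15698 — 7 statements merged into one kernel-verified Lean document; each statement's English description precedes it below -/
import Mathlib

section
/- Let $\lambda, k, \ell > 0$ and define $P(t) = \lambda e^{-(\sqrt{k}t-\lambda)^2/t} - \pi^{1/2}\ell^{-1}t^{3/2}$ for $t > \lambda k^{-1/2}$. Then $P$ is strictly decreasing on the interval $(\lambda k^{-1/2}, \infty)$. -/
open Real

theorem approx_peak_strictAnti (lam k ell : ℝ) (hlam : 0 < lam) (hk : 0 < k)
    (hell : 0 < ell) :
    StrictAntiOn
      (fun t : ℝ => lam * Real.exp (-(Real.sqrt k * t - lam) ^ 2 / t)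
        - Real.sqrt Real.pi * ell⁻¹ * t ^ ((3 : ℝ) / 2))
      (Set.Ioi (lam * (Real.sqrt k)⁻¹)) := by
  intro x hx y hy hxy
  simp only [Set.mem_Ioi] at hx hy
  set s := Real.sqrt k with hs
  have hs0 : 0 < s := Real.sqrt_pos.mpr hk
  have hlx : lam < s * x := by
    have := (div_lt_iff₀ hs0).mp (by rw [div_eq_mul_inv]; exact hx)
    linarith [this]
  have hly : lam < s * y := by
    have := (div_lt_iff₀ hs0).mp (by rw [div_eq_mul_inv]; exact hy)
    linarith [this]
  have hx0 : 0 < x := lt_trans (by positivity) hlx |>.trans_le (le_of_eq rfl) |> fun h => by nlinarith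
  have hy0 : 0 < y := by nlinarith
  -- key inequality on the quadratic part
  have hkey : (s * x - lam) ^ 2 * y < (s * y - lam) ^ 2 * x := by
    nlinarith [mul_pos (sub_pos.mpr hxy) (sub_pos.mpr (show lam * lam < (s * x) * (s * y) from
      mul_lt_mul'' hlx hly hlam.le hlam.le))]
  have hdiv : (s * x - lam) ^ 2 / x < (s * y - lam) ^ 2 / y :=
    (div_lt_div_iff₀ hx0 hy0).mpr hkey
  have hexp : Real.exp (-(s * y - lam) ^ 2 / y) < Real.exp (-(s * x - lam) ^ 2 / x) := by
    apply Real.exp_lt_exp.mpr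
    rw [neg_div, neg_div]
    exact neg_lt_neg hdiv
  have hrpow : x ^ ((3 : ℝ) / 2) < y ^ ((3 : ℝ) / 2) :=
    Real.rpow_lt_rpow hx0.le hxy (by norm_num)
  have hc : 0 < Real.sqrt Real.pi * ell⁻¹ := by positivity
  simp only
  exact sub_lt_sub (mul_lt_mul_of_pos_left hexp hlam)
    (mul_lt_mul_of_pos_left hrpow hc)
end

section
/- Let $\lambda, k, \ell > 0$ with $\ell > \pi^{1/2} k^{-3/4} \lambda^{1/2}$, and define $P(t) = \lambda e^{-(\sqrt{k}t-\lambda)^2/t} - \pi^{1/2}\ell^{-1}t^{3/2}$ for $t > \lambda k^{-1/2}$. Then there exists a unique $t^* \in (\lambda k^{-1/2}, \infty)$ with $P(t^*) = 0$; moreover $P(t) > 0$ for $\lambda k^{-1/2} < t < t^*$ and $P(t) < 0$ for $t > t^*$. -/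
open Real

theorem approx_peak_unique_root (lam k ell : ℝ) (hlam : 0 < lam) (hk : 0 < k)
    (hell : 0 < ell)
    (hbig : Real.sqrt Real.pi * k ^ (-(3 : ℝ) / 4) * Real.sqrt lam < ell) :
    ∃ tstar : ℝ, lam * (Real.sqrt k)⁻¹ < tstar ∧
      (lam * Real.exp (-(Real.sqrt k * tstar - lam) ^ 2 / tstar)
        - Real.sqrt Real.pi * ell⁻¹ * tstar ^ ((3 : ℝ) / 2) = 0) ∧
      (∀ t : ℝ, lam * (Real.sqrt k)⁻¹ < t →
        (lam * Real.exp (-(Real.sqrt k * t - lam) ^ 2 / t)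
          - Real.sqrt Real.pi * ell⁻¹ * t ^ ((3 : ℝ) / 2) = 0) → t = tstar) ∧
      (∀ t : ℝ, lam * (Real.sqrt k)⁻¹ < t → t < tstar →
        0 < lam * Real.exp (-(Real.sqrt k * t - lam) ^ 2 / t)
          - Real.sqrt Real.pi * ell⁻¹ * t ^ ((3 : ℝ) / 2)) ∧
      (∀ t : ℝ, tstar < t →
        lam * Real.exp (-(Real.sqrt k * t - lam) ^ 2 / t)
          - Real.sqrt Real.pi * ell⁻¹ * t ^ ((3 : ℝ) / 2) < 0) := by
  set f : ℝ → ℝ := fun t => lam * Real.exp (-(Real.sqrt k * t - lam) ^ 2 / t)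
      - Real.sqrt Real.pi * ell⁻¹ * t ^ ((3 : ℝ) / 2) with hf
  set a : ℝ := lam * (Real.sqrt k)⁻¹ with ha
  have hr : 0 < Real.sqrt k := Real.sqrt_pos.mpr hk
  have ha0 : 0 < a := mul_pos hlam (inv_pos.mpr hr)
  have hpi : 0 < Real.sqrt Real.pi := Real.sqrt_pos.mpr Real.pi_pos
  -- strict antitonicity
  have hanti : ∀ s t : ℝ, a ≤ s → s < t → f t < f s := by
    intro s t hs hst
    have hs0 : 0 < s := lt_of_lt_of_le ha0 hs
    have ht0 : 0 < t := lt_trans hs0 hst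
    have hrs : lam ≤ Real.sqrt k * s := by
      rw [ha] at hs
      calc lam = lam * (Real.sqrt k)⁻¹ * Real.sqrt k := by field_simp
        _ ≤ s * Real.sqrt k := by nlinarith
        _ = Real.sqrt k * s := mul_comm _ _
    have hrt : lam < Real.sqrt k * t := lt_of_le_of_lt hrs (by nlinarith)
    have hprod : lam * lam < (Real.sqrt k * s) * (Real.sqrt k * t) := by nlinarith
    have hglt : (Real.sqrt k * s - lam) ^ 2 / s < (Real.sqrt k * t - lam) ^ 2 / t := by
      rw [div_lt_div_iff₀ hs0 ht0]
      nlinarith [mul_pos (sub_pos.mpr hst) (sub_pos.mpr hprod)]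
    have hexp : Real.exp (-(Real.sqrt k * t - lam) ^ 2 / t)
        < Real.exp (-(Real.sqrt k * s - lam) ^ 2 / s) := by
      apply Real.exp_lt_exp.mpr
      rw [neg_div, neg_div]
      exact neg_lt_neg hglt
    have hrpow : s ^ ((3 : ℝ) / 2) < t ^ ((3 : ℝ) / 2) :=
      Real.rpow_lt_rpow hs0.le hst (by norm_num)
    have h1 : lam * Real.exp (-(Real.sqrt k * t - lam) ^ 2 / t)
        < lam * Real.exp (-(Real.sqrt k * s - lam) ^ 2 / s) :=
      mul_lt_mul_of_pos_left hexp hlam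
    have h2 : Real.sqrt Real.pi * ell⁻¹ * s ^ ((3 : ℝ) / 2)
        < Real.sqrt Real.pi * ell⁻¹ * t ^ ((3 : ℝ) / 2) :=
      mul_lt_mul_of_pos_left hrpow (mul_pos hpi (inv_pos.mpr hell))
    simp only [hf]
    linarith
  -- value at a is positive
  have hfa : 0 < f a := by
    have h1 : Real.sqrt k * a - lam = 0 := by
      rw [ha]; field_simp; ring
    have haexp : lam * Real.exp (-(Real.sqrt k * a - lam) ^ 2 / a) = lam := by
      rw [h1]; simp
    have harpow : a ^ ((3 : ℝ) / 2) = lam * Real.sqrt lam * k ^ (-(3 : ℝ) / 4) := by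
      rw [ha, Real.mul_rpow hlam.le (inv_nonneg.mpr hr.le)]
      have e1 : lam ^ ((3 : ℝ) / 2) = lam * Real.sqrt lam := by
        rw [show (3 : ℝ) / 2 = 1 + 1 / 2 by norm_num, Real.rpow_add hlam, Real.rpow_one,
          Real.sqrt_eq_rpow]
      have e2 : ((Real.sqrt k)⁻¹ : ℝ) ^ ((3 : ℝ) / 2) = k ^ (-(3 : ℝ) / 4) := by
        have hinv : (Real.sqrt k)⁻¹ = k ^ (-((1 : ℝ) / 2)) := by
          rw [Real.rpow_neg hk.le, ← Real.sqrt_eq_rpow]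
        rw [hinv, ← Real.rpow_mul hk.le]
        norm_num
      rw [e1, e2]
    simp only [hf]
    rw [haexp, harpow]
    have hkq : 0 < k ^ (-(3 : ℝ) / 4) := Real.rpow_pos_of_pos hk _
    have hsl : 0 < Real.sqrt lam := Real.sqrt_pos.mpr hlam
    have : Real.sqrt Real.pi * ell⁻¹ * (lam * Real.sqrt lam * k ^ (-(3 : ℝ) / 4)) < lam := by
      rw [show Real.sqrt Real.pi * ell⁻¹ * (lam * Real.sqrt lam * k ^ (-(3 : ℝ) / 4))
          = (Real.sqrt Real.pi * k ^ (-(3:ℝ)/4) * Real.sqrt lam) * lam * ell⁻¹ by ring]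
      calc (Real.sqrt Real.pi * k ^ (-(3:ℝ)/4) * Real.sqrt lam) * lam * ell⁻¹
          < ell * lam * ell⁻¹ := by
            apply mul_lt_mul_of_pos_right _ (inv_pos.mpr hell)
            exact mul_lt_mul_of_pos_right hbig hlam
        _ = lam := by field_simp
    linarith
  -- pick b with f b < 0
  set M : ℝ := lam * ell / Real.sqrt Real.pi with hM
  have hM0 : 0 < M := by positivity
  set b : ℝ := max (a + 1) (M ^ ((2 : ℝ) / 3) + 1) with hb
  have hab : a < b := lt_of_lt_of_le (by linarith) (le_max_left _ _)
  have hb0 : 0 < b := lt_trans ha0 hab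
  have hfb : f b < 0 := by
    have hMb : M ^ ((2 : ℝ) / 3) < b := lt_of_lt_of_le (by linarith) (le_max_right _ _)
    have hMpow : M < b ^ ((3 : ℝ) / 2) := by
      have := Real.rpow_lt_rpow (by positivity : (0:ℝ) ≤ M ^ ((2:ℝ)/3)) hMb
        (by norm_num : (0:ℝ) < 3/2)
      rwa [← Real.rpow_mul hM0.le, show (2:ℝ)/3 * (3/2) = 1 by norm_num,
        Real.rpow_one] at this
    have hexp1 : Real.exp (-(Real.sqrt k * b - lam) ^ 2 / b) ≤ 1 := by
      apply Real.exp_le_one_iff.mpr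
      rw [neg_div]
      have : 0 ≤ (Real.sqrt k * b - lam) ^ 2 / b := by positivity
      linarith
    have h1 : lam * Real.exp (-(Real.sqrt k * b - lam) ^ 2 / b) ≤ lam := by
      nlinarith
    have h2 : lam < Real.sqrt Real.pi * ell⁻¹ * b ^ ((3 : ℝ) / 2) := by
      have : Real.sqrt Real.pi * ell⁻¹ * M < Real.sqrt Real.pi * ell⁻¹ * b ^ ((3 : ℝ) / 2) :=
        mul_lt_mul_of_pos_left hMpow (by positivity)
      have hMe : Real.sqrt Real.pi * ell⁻¹ * M = lam := by
        rw [hM]; field_simp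
      linarith
    simp only [hf]
    linarith
  -- intermediate value theorem
  have hcont : ContinuousOn f (Set.Icc a b) := by
    apply ContinuousOn.sub
    · apply ContinuousOn.mul continuousOn_const
      apply Real.continuous_exp.comp_continuousOn
      apply ContinuousOn.div (by fun_prop) continuousOn_id
      intro x hx
      exact ne_of_gt (lt_of_lt_of_le ha0 hx.1)
    · apply ContinuousOn.mul continuousOn_const
      exact ContinuousOn.rpow_const continuousOn_id (fun x _ => Or.inr (by norm_num))
  have hmem : (0 : ℝ) ∈ Set.Icc (f b) (f a) := ⟨hfb.le, hfa.le⟩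
  obtain ⟨c, hc, hfc⟩ := intermediate_value_Icc' hab.le hcont hmem
  have hca : a < c := by
    rcases lt_or_eq_of_le hc.1 with h | h
    · exact h
    · exfalso; rw [← h] at hfc; linarith
  refine ⟨c, hca, hfc, ?_, ?_, ?_⟩
  · intro t hta hft
    have hft' : f t = 0 := hft
    rcases lt_trichotomy t c with h | h | h
    · have := hanti t c hta.le h; rw [hfc, hft'] at this; linarith
    · exact h
    · have := hanti c t hca.le h; rw [hfc, hft'] at this; linarith
  · intro t hta htc
    have := hanti t c hta.le htc
    rw [hfc] at this
    show 0 < f t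
    exact this
  · intro t hct
    have := hanti c t hca.le hct
    rw [hfc] at this
    show f t < 0
    exact this
end

section
/- Let $k, \ell, t_{peak} > 0$ satisfy $\ell^{-1} t_{peak} \sqrt{\pi} < \sqrt{k\, t_{peak}}$ (equivalently $t_{peak} k^{1/2} - \pi^{1/2}\ell^{-1}t_{peak}^{3/2} > 0$). Then there exists a unique $\lambda^* \in (0, t_{peak}\sqrt{k})$ such that $\lambda^* e^{-(\sqrt{k}t_{peak}-\lambda^*)^2/t_{peak}} = \pi^{1/2}\ell^{-1}t_{peak}^{3/2}$. -/
open Real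

theorem unique_lambda_from_peak (k ell tp : ℝ) (hk : 0 < k) (hell : 0 < ell)
    (htp : 0 < tp)
    (hcond : ell⁻¹ * tp * Real.sqrt Real.pi < Real.sqrt (k * tp)) :
    ∃! lam : ℝ, (0 < lam ∧ lam < tp * Real.sqrt k) ∧
      lam * Real.exp (-(Real.sqrt k * tp - lam) ^ 2 / tp)
        = Real.sqrt Real.pi * ell⁻¹ * tp ^ ((3 : ℝ) / 2) := by
  set M : ℝ := tp * Real.sqrt k with hMdef
  set c : ℝ := Real.sqrt Real.pi * ell⁻¹ * tp ^ ((3 : ℝ) / 2) with hcdef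
  set f : ℝ → ℝ := fun x => x * Real.exp (-(Real.sqrt k * tp - x) ^ 2 / tp) with hfdef
  have hsk : 0 < Real.sqrt k := Real.sqrt_pos.2 hk
  have hstp : 0 < Real.sqrt tp := Real.sqrt_pos.2 htp
  have hM : 0 < M := mul_pos htp hsk
  have htp32 : tp ^ ((3 : ℝ) / 2) = tp * Real.sqrt tp := by
    rw [show (3 : ℝ) / 2 = 1 + 1 / 2 by norm_num, Real.rpow_add htp, Real.rpow_one,
      ← Real.sqrt_eq_rpow]
  have hc0 : 0 < c := by
    rw [hcdef, htp32]
    have hπ : 0 < Real.sqrt Real.pi := Real.sqrt_pos.2 Real.pi_pos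
    positivity
  have hsqmul : Real.sqrt (k * tp) = Real.sqrt k * Real.sqrt tp := Real.sqrt_mul hk.le tp
  have hcM : c < M := by
    rw [hcdef, htp32, hMdef]
    have h2 : ell⁻¹ * tp * Real.sqrt Real.pi * Real.sqrt tp
        < Real.sqrt k * Real.sqrt tp * Real.sqrt tp := by
      rw [← hsqmul]
      exact mul_lt_mul_of_pos_right hcond hstp
    have h3 : Real.sqrt tp * Real.sqrt tp = tp := Real.mul_self_sqrt htp.le
    nlinarith
  have hmono : StrictMonoOn f (Set.Icc 0 M) := by
    intro a ha b hb hab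
    have hbM : b ≤ Real.sqrt k * tp := by rw [mul_comm]; exact hb.2
    have hsq : (Real.sqrt k * tp - b) ^ 2 < (Real.sqrt k * tp - a) ^ 2 := by
      nlinarith [ha.1, hab, hbM]
    have hE : -(Real.sqrt k * tp - a) ^ 2 / tp < -(Real.sqrt k * tp - b) ^ 2 / tp :=
      div_lt_div_of_pos_right (by linarith) htp
    exact mul_lt_mul'' hab (Real.exp_lt_exp.2 hE) ha.1 (Real.exp_pos _).le
  have hcont : Continuous f := by
    apply Continuous.mul continuous_id
    exact Real.continuous_exp.comp (by continuity)
  have hf0 : f 0 = 0 := by simp [hfdef]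
  have hfM : f M = M := by
    have : Real.sqrt k * tp - M = 0 := by rw [hMdef]; ring
    simp [hfdef, this]
  have hsub := intermediate_value_Ioo hM.le hcont.continuousOn
  rw [hf0, hfM] at hsub
  obtain ⟨lam, hlam, hflam⟩ := hsub ⟨hc0, hcM⟩
  refine ⟨lam, ⟨⟨hlam.1, hlam.2⟩, hflam⟩, ?_⟩
  intro y ⟨⟨hy1, hy2⟩, hfy⟩
  have h1 : y ∈ Set.Icc 0 M := ⟨hy1.le, hy2.le⟩
  have h2 : lam ∈ Set.Icc 0 M := ⟨hlam.1.le, hlam.2.le⟩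
  exact hmono.injOn h1 h2 (by show f y = f lam; simp only [hfdef]; rw [hfy]; exact hflam.symm)
end

section
/- Let $k, \ell > 0$ and for $i = 1, 2$ let $\lambda_i > 0$ with $\ell > \pi^{1/2}k^{-3/4}\lambda_i^{1/2}$, and let $t_i > \lambda_i k^{-1/2}$ be the unique root of $P(t;\lambda_i) = \lambda_i e^{-(\sqrt{k}t-\lambda_i)^2/t} - \pi^{1/2}\ell^{-1}t^{3/2} = 0$. Then $t_1 > t_2$ if and only if $\lambda_1 > \lambda_2$. -/
open Real

private lemma exp_arg_le (s lam ta tb : ℝ) (hlam : 0 < lam) (hs : 0 < s)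
    (htb0 : 0 < tb) (hltb : lam < s * tb) (h : tb ≤ ta) :
    -(s * ta - lam) ^ 2 / ta ≤ -(s * tb - lam) ^ 2 / tb := by
  have hta0 : 0 < ta := lt_of_lt_of_le htb0 h
  have hlta : lam < s * ta := hltb.trans_le (by nlinarith)
  have h1 : lam * lam < (s * tb) * (s * ta) := mul_lt_mul'' hltb hlta hlam.le hlam.le
  rw [div_le_div_iff₀ hta0 htb0]
  nlinarith [mul_nonneg (sub_nonneg.mpr h) (sub_nonneg.mpr h1.le)]

private lemma exp_arg_lt (s lam ta tb : ℝ) (hlam : 0 < lam) (hs : 0 < s)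
    (htb0 : 0 < tb) (hltb : lam < s * tb) (h : tb < ta) :
    -(s * ta - lam) ^ 2 / ta < -(s * tb - lam) ^ 2 / tb := by
  have hta0 : 0 < ta := lt_trans htb0 h
  have hlta : lam < s * ta := hltb.trans_le (by nlinarith)
  have h1 : lam * lam < (s * tb) * (s * ta) := mul_lt_mul'' hltb hlta hlam.le hlam.le
  rw [div_lt_div_iff₀ hta0 htb0]
  nlinarith [mul_pos (sub_pos.mpr h) (sub_pos.mpr h1)]

private lemma no_root_pair (k ell la lb ta tb : ℝ) (hk : 0 < k) (hell : 0 < ell)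
    (hla : 0 < la) (hlb : 0 < lb)
    (hta : la * (Real.sqrt k)⁻¹ < ta) (htb : lb * (Real.sqrt k)⁻¹ < tb)
    (hroota : la * Real.exp (-(Real.sqrt k * ta - la) ^ 2 / ta)
      - Real.sqrt Real.pi * ell⁻¹ * ta ^ ((3 : ℝ) / 2) = 0)
    (hrootb : lb * Real.exp (-(Real.sqrt k * tb - lb) ^ 2 / tb)
      - Real.sqrt Real.pi * ell⁻¹ * tb ^ ((3 : ℝ) / 2) = 0)
    (hle : la ≤ lb) (htle : tb ≤ ta) (hstrict : la < lb ∨ tb < ta) : False := by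
  set s := Real.sqrt k with hs_def
  have hs : 0 < s := Real.sqrt_pos.mpr hk
  have htb0 : 0 < tb := lt_trans (by positivity) htb
  have hta0 : 0 < ta := lt_of_lt_of_le htb0 htle
  have hltb : lb < s * tb := by
    have h' : lb / s < tb := by rwa [div_eq_mul_inv]
    have := (div_lt_iff₀ hs).mp h'
    nlinarith
  have hlta_b : lb < s * ta := hltb.trans_le (by nlinarith)
  have hc : (0:ℝ) < Real.sqrt Real.pi * ell⁻¹ := by
    have : (0:ℝ) < Real.sqrt Real.pi := Real.sqrt_pos.mpr Real.pi_pos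
    positivity
  have ea : la * Real.exp (-(s * ta - la) ^ 2 / ta)
      = Real.sqrt Real.pi * ell⁻¹ * ta ^ ((3 : ℝ) / 2) := by linarith
  have eb : lb * Real.exp (-(s * tb - lb) ^ 2 / tb)
      = Real.sqrt Real.pi * ell⁻¹ * tb ^ ((3 : ℝ) / 2) := by linarith
  -- lambda-monotonicity at fixed time ta
  have hsq : (s * ta - lb) ^ 2 ≤ (s * ta - la) ^ 2 := by nlinarith
  have hargs : -(s * ta - la) ^ 2 / ta ≤ -(s * ta - lb) ^ 2 / ta :=
    (div_le_div_iff_of_pos_right hta0).mpr (by linarith)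
  -- time-monotonicity for lb
  have harg2 : -(s * ta - lb) ^ 2 / ta ≤ -(s * tb - lb) ^ 2 / tb :=
    exp_arg_le s lb ta tb hlb hs htb0 hltb htle
  have hrpow : Real.sqrt Real.pi * ell⁻¹ * tb ^ ((3 : ℝ) / 2)
      ≤ Real.sqrt Real.pi * ell⁻¹ * ta ^ ((3 : ℝ) / 2) :=
    mul_le_mul_of_nonneg_left (Real.rpow_le_rpow htb0.le htle (by norm_num)) hc.le
  rcases hstrict with hlt | hlt
  · have s1 : la * Real.exp (-(s * ta - la) ^ 2 / ta)
        < lb * Real.exp (-(s * ta - lb) ^ 2 / ta) :=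
      lt_of_lt_of_le (mul_lt_mul_of_pos_right hlt (Real.exp_pos _))
        (mul_le_mul_of_nonneg_left (Real.exp_le_exp.mpr hargs) hlb.le)
    have s2 : lb * Real.exp (-(s * ta - lb) ^ 2 / ta)
        ≤ lb * Real.exp (-(s * tb - lb) ^ 2 / tb) :=
      mul_le_mul_of_nonneg_left (Real.exp_le_exp.mpr harg2) hlb.le
    linarith
  · have s1 : la * Real.exp (-(s * ta - la) ^ 2 / ta)
        ≤ lb * Real.exp (-(s * ta - lb) ^ 2 / ta) :=
      le_trans (mul_le_mul_of_nonneg_right hle (Real.exp_pos _).le)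
        (mul_le_mul_of_nonneg_left (Real.exp_le_exp.mpr hargs) hlb.le)
    have harg2' : -(s * ta - lb) ^ 2 / ta < -(s * tb - lb) ^ 2 / tb :=
      exp_arg_lt s lb ta tb hlb hs htb0 hltb hlt
    have s2 : lb * Real.exp (-(s * ta - lb) ^ 2 / ta)
        < lb * Real.exp (-(s * tb - lb) ^ 2 / tb) :=
      mul_lt_mul_of_pos_left (Real.exp_lt_exp.mpr harg2') hlb
    linarith

theorem approx_peak_order_relation (k ell lam1 lam2 t1 t2 : ℝ)
    (hk : 0 < k) (hell : 0 < ell)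
    (hlam1 : 0 < lam1) (hlam2 : 0 < lam2)
    (hbig1 : Real.sqrt Real.pi * k ^ (-(3 : ℝ) / 4) * Real.sqrt lam1 < ell)
    (hbig2 : Real.sqrt Real.pi * k ^ (-(3 : ℝ) / 4) * Real.sqrt lam2 < ell)
    (ht1 : lam1 * (Real.sqrt k)⁻¹ < t1)
    (ht2 : lam2 * (Real.sqrt k)⁻¹ < t2)
    (hroot1 : lam1 * Real.exp (-(Real.sqrt k * t1 - lam1) ^ 2 / t1)
      - Real.sqrt Real.pi * ell⁻¹ * t1 ^ ((3 : ℝ) / 2) = 0)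
    (hroot2 : lam2 * Real.exp (-(Real.sqrt k * t2 - lam2) ^ 2 / t2)
      - Real.sqrt Real.pi * ell⁻¹ * t2 ^ ((3 : ℝ) / 2) = 0) :
    t2 < t1 ↔ lam2 < lam1 := by
  constructor
  · intro h12
    by_contra hcn
    push_neg at hcn
    exact no_root_pair k ell lam1 lam2 t1 t2 hk hell hlam1 hlam2 ht1 ht2 hroot1 hroot2
      hcn h12.le (Or.inr h12)
  · intro hl
    by_contra hcn
    push_neg at hcn
    exact no_root_pair k ell lam2 lam1 t2 t1 hk hell hlam2 hlam1 ht2 ht1 hroot2 hroot1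
      hl.le hcn (Or.inl hl)
end

section
/- Let $k, \ell > 0$ and for $i = 1, 2$ let $\lambda_i > 0$ with $\ell > \pi^{1/2}k^{-3/4}\lambda_i^{1/2}$, and let $t_i$ be the unique root in $(\lambda_i k^{-1/2}, \infty)$ of $\lambda_i e^{-(\sqrt{k}t-\lambda_i)^2/t} = \pi^{1/2}\ell^{-1}t^{3/2}$. If $t_1 = t_2$ then $\lambda_1 = \lambda_2$. -/
open Real

lemma approx_peak_mono (s t a b : ℝ) (ht : 0 < t) (ha : 0 < a) (hab : a < b)
    (hb : b < s) :
    Real.log a - (s - a) ^ 2 / t < Real.log b - (s - b) ^ 2 / t := by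
  have h1 : Real.log a < Real.log b := Real.log_lt_log ha hab
  have h2 : (s - b) ^ 2 < (s - a) ^ 2 := by nlinarith
  have h3 : (s - b) ^ 2 / t < (s - a) ^ 2 / t := by gcongr
  linarith

theorem approx_peak_injective (k ell lam1 lam2 t1 t2 : ℝ)
    (hk : 0 < k) (hell : 0 < ell)
    (hlam1 : 0 < lam1) (hlam2 : 0 < lam2)
    (hbig1 : Real.sqrt Real.pi * k ^ (-(3 : ℝ) / 4) * Real.sqrt lam1 < ell)
    (hbig2 : Real.sqrt Real.pi * k ^ (-(3 : ℝ) / 4) * Real.sqrt lam2 < ell)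
    (ht1 : lam1 * (Real.sqrt k)⁻¹ < t1)
    (ht2 : lam2 * (Real.sqrt k)⁻¹ < t2)
    (hroot1 : lam1 * Real.exp (-(Real.sqrt k * t1 - lam1) ^ 2 / t1)
      = Real.sqrt Real.pi * ell⁻¹ * t1 ^ ((3 : ℝ) / 2))
    (hroot2 : lam2 * Real.exp (-(Real.sqrt k * t2 - lam2) ^ 2 / t2)
      = Real.sqrt Real.pi * ell⁻¹ * t2 ^ ((3 : ℝ) / 2))
    (heq : t1 = t2) : lam1 = lam2 := by
  subst heq
  have hsk : 0 < Real.sqrt k := Real.sqrt_pos.mpr hk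
  have ht : 0 < t1 := lt_trans (by positivity) ht1
  have hl1 : lam1 < Real.sqrt k * t1 := by
    have := (div_lt_iff₀ hsk).mp (by rwa [div_eq_mul_inv] : lam1 / Real.sqrt k < t1)
    linarith
  have hl2 : lam2 < Real.sqrt k * t1 := by
    have := (div_lt_iff₀ hsk).mp (by rwa [div_eq_mul_inv] : lam2 / Real.sqrt k < t1)
    linarith
  have hEq : lam1 * Real.exp (-(Real.sqrt k * t1 - lam1) ^ 2 / t1)
      = lam2 * Real.exp (-(Real.sqrt k * t1 - lam2) ^ 2 / t1) := by
    rw [hroot1, hroot2]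
  have hlog : Real.log lam1 + (-(Real.sqrt k * t1 - lam1) ^ 2 / t1)
      = Real.log lam2 + (-(Real.sqrt k * t1 - lam2) ^ 2 / t1) := by
    have h1 := congrArg Real.log hEq
    rwa [Real.log_mul (ne_of_gt hlam1) (Real.exp_ne_zero _),
      Real.log_mul (ne_of_gt hlam2) (Real.exp_ne_zero _),
      Real.log_exp, Real.log_exp] at h1
  set s := Real.sqrt k * t1 with hs
  have hlog' : Real.log lam1 - (s - lam1) ^ 2 / t1
      = Real.log lam2 - (s - lam2) ^ 2 / t1 := by
    have h := hlog
    ring_nf at h ⊢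
    linarith
  rcases lt_trichotomy lam1 lam2 with h | h | h
  · have := approx_peak_mono s t1 lam1 lam2 ht hlam1 h hl2
    linarith
  · exact h
  · have := approx_peak_mono s t1 lam2 lam1 ht hlam2 h hl1
    linarith
end

section
/- Let $0 < \delta_1 < \delta_2$ and let $f_\lambda \in C^1[\delta_1, \infty)$ (for each $\lambda > 0$) satisfy $|\partial_s f_\lambda(s)| \le C\lambda^{-1}|f_\lambda(s)|$ for all $s \ge \delta_1$, with $C$ independent of $\lambda$. Then $\int_{\delta_1}^{\delta_2} e^{-\lambda\eta} f_\lambda(\eta)\,d\eta = \lambda^{-1} f_\lambda(\delta_1) e^{-\lambda\delta_1} + O(\lambda^{-3} f_\lambda(\delta_1) e^{-\lambda\delta_1})$ as $\lambda \to \infty$; i.e., there exist $C', \Lambda > 0$ such that for all $\lambda \ge \Lambda$, $|\int_{\delta_1}^{\delta_2} e^{-\lambda\eta} f_\lambda(\eta)\,d\eta - \lambda^{-1} f_\lambda(\delta_1) e^{-\lambda\delta_1}| \le C'\lambda^{-3}|f_\lambda(\delta_1)| e^{-\lambda\delta_1}$. -/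
open Real MeasureTheory intervalIntegral

-- main per-lambda estimate
theorem key_estimate (d1 d2 C : ℝ) (hd1 : 0 < d1) (hd12 : d1 < d2)
    (hC : 0 < C) (f f' : ℝ → ℝ → ℝ)
    (hderiv : ∀ lam : ℝ, 0 < lam → ∀ s : ℝ, d1 ≤ s → HasDerivAt (f lam) (f' lam s) s)
    (hcont : ∀ lam : ℝ, 0 < lam → ContinuousOn (f' lam) (Set.Ici d1))
    (hbound : ∀ lam : ℝ, 0 < lam → ∀ s : ℝ, d1 ≤ s →
      |f' lam s| ≤ C * lam⁻¹ * |f lam s|)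
    (lam : ℝ) (h1 : 1 ≤ lam) (h2 : lam ^ 2 * Real.exp (-(lam * (d2 - d1))) ≤ 1) :
    |(∫ η in d1..d2, Real.exp (-lam * η) * f lam η)
          - lam⁻¹ * f lam d1 * Real.exp (-lam * d1)|
        ≤ (Real.exp (C * (d2 - d1)) * (C + 1)) * (lam ^ 3)⁻¹ * |f lam d1| * Real.exp (-lam * d1) := by
  have hlam : 0 < lam := lt_of_lt_of_le one_pos h1
  set E := Real.exp (C * (d2 - d1)) with hEdef
  have hEpos : 0 < E := Real.exp_pos _
  -- Gronwall
  have hgron : ∀ s ∈ Set.Icc d1 d2, |f lam s| ≤ |f lam d1| * E := by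
    have key := norm_le_gronwallBound_of_norm_deriv_right_le
      (f := f lam) (f' := f' lam) (δ := ‖f lam d1‖) (K := C * lam⁻¹) (ε := 0)
      (a := d1) (b := d2)
      (fun x hx => (hderiv lam hlam x hx.1).continuousAt.continuousWithinAt)
      (fun x hx => (hderiv lam hlam x hx.1).hasDerivWithinAt)
      le_rfl
      (by
        intro x hx
        rw [add_zero, Real.norm_eq_abs, Real.norm_eq_abs]
        exact hbound lam hlam x hx.1)
    intro s hs
    have h := key s hs
    rw [gronwallBound_ε0, Real.norm_eq_abs, Real.norm_eq_abs] at h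
    refine h.trans ?_
    have : C * lam⁻¹ * (s - d1) ≤ C * (d2 - d1) := by
      have hinv : lam⁻¹ ≤ 1 := inv_le_one_of_one_le₀ h1
      have hs1 : 0 ≤ s - d1 := by linarith [hs.1]
      have hs2 : s - d1 ≤ d2 - d1 := by linarith [hs.2]
      calc C * lam⁻¹ * (s - d1) ≤ C * 1 * (s - d1) := by
            apply mul_le_mul_of_nonneg_right _ hs1
            exact mul_le_mul_of_nonneg_left hinv hC.le
        _ = C * (s - d1) := by ring
        _ ≤ C * (d2 - d1) := by nlinarith
    exact mul_le_mul_of_nonneg_left (Real.exp_le_exp.mpr this) (abs_nonneg _)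
  -- antiderivative of exp(-lam x)
  have hv : ∀ x : ℝ, HasDerivAt (fun η : ℝ => -(Real.exp (-lam * η)) / lam)
      (Real.exp (-lam * x)) x := by
    intro x
    have h1' : HasDerivAt (fun η : ℝ => -lam * η) (-lam) x := by
      simpa using (hasDerivAt_id x).const_mul (-lam)
    have h2' := h1'.exp
    have h3' := (h2'.neg).div_const lam
    refine h3'.congr_deriv ?_
    rw [mul_neg, neg_neg, mul_div_assoc, div_self hlam.ne', mul_one]
  -- integrabilities
  have hcontf' : ContinuousOn (f' lam) (Set.uIcc d1 d2) :=
    (hcont lam hlam).mono (by rw [Set.uIcc_of_le hd12.le]; exact fun x hx => hx.1)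
  have hI1 : IntervalIntegrable (f' lam) volume d1 d2 :=
    hcontf'.intervalIntegrable
  have hexpcont : Continuous (fun η : ℝ => Real.exp (-lam * η)) :=
    Real.continuous_exp.comp (continuous_const.mul continuous_id)
  have hI2 : IntervalIntegrable (fun η : ℝ => Real.exp (-lam * η)) volume d1 d2 :=
    hexpcont.intervalIntegrable _ _
  -- integral of exp
  have hEI : (∫ x in d1..d2, Real.exp (-lam * x))
      = -(Real.exp (-lam * d2)) / lam - (-(Real.exp (-lam * d1)) / lam) :=
    intervalIntegral.integral_eq_sub_of_hasDerivAt
      (fun x _ => hv x) hI2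
  have hEIle : (∫ x in d1..d2, Real.exp (-lam * x)) ≤ lam⁻¹ * Real.exp (-lam * d1) := by
    rw [hEI]
    have heq : -(Real.exp (-lam * d2)) / lam - -(Real.exp (-lam * d1)) / lam
        = lam⁻¹ * Real.exp (-lam * d1) - lam⁻¹ * Real.exp (-lam * d2) := by
      field_simp
      ring
    rw [heq]
    exact sub_le_self _ (by positivity)
  -- integration by parts
  have hibp := intervalIntegral.integral_mul_deriv_eq_deriv_mul
      (u := f lam) (v := fun η : ℝ => -(Real.exp (-lam * η)) / lam)
      (u' := f' lam) (v' := fun η : ℝ => Real.exp (-lam * η)) (a := d1) (b := d2)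
      (fun x hx => hderiv lam hlam x ((Set.uIcc_of_le hd12.le ▸ hx).1))
      (fun x _ => hv x) hI1 hI2
  set J := ∫ x in d1..d2, f' lam x * Real.exp (-lam * x) with hJdef
  have hsplit : (∫ η in d1..d2, Real.exp (-lam * η) * f lam η)
      - lam⁻¹ * f lam d1 * Real.exp (-lam * d1)
      = lam⁻¹ * J - lam⁻¹ * (f lam d2 * Real.exp (-lam * d2)) := by
    have hcomm : (∫ η in d1..d2, Real.exp (-lam * η) * f lam η)
        = ∫ η in d1..d2, f lam η * Real.exp (-lam * η) := by
      simp_rw [mul_comm]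
    have hlast : (∫ x in d1..d2, f' lam x * (-(Real.exp (-lam * x)) / lam))
        = -(lam⁻¹) * J := by
      rw [hJdef, ← intervalIntegral.integral_const_mul]
      apply intervalIntegral.integral_congr
      intro x _
      field_simp
    rw [hcomm, hibp, hlast]
    field_simp
    ring
  rw [hsplit]
  -- bound J
  have habsJ : |J| ≤ C * lam⁻¹ * (|f lam d1| * E) * (lam⁻¹ * Real.exp (-lam * d1)) := by
    have hKnn : 0 ≤ C * lam⁻¹ * (|f lam d1| * E) := by positivity
    have hstep1 : |J| ≤ ∫ x in d1..d2, |f' lam x * Real.exp (-lam * x)| :=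
      intervalIntegral.abs_integral_le_integral_abs hd12.le
    have hstep2 : (∫ x in d1..d2, |f' lam x * Real.exp (-lam * x)|)
        ≤ ∫ x in d1..d2, C * lam⁻¹ * (|f lam d1| * E) * Real.exp (-lam * x) := by
      apply intervalIntegral.integral_mono_on hd12.le
      · exact (hcontf'.mul hexpcont.continuousOn).abs.intervalIntegrable
      · exact (hI2.const_mul _)
      · intro x hx
        rw [abs_mul, abs_of_pos (Real.exp_pos _)]
        apply mul_le_mul_of_nonneg_right _ (Real.exp_pos _).le
        calc |f' lam x| ≤ C * lam⁻¹ * |f lam x| := hbound lam hlam x hx.1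
          _ ≤ C * lam⁻¹ * (|f lam d1| * E) := by
              apply mul_le_mul_of_nonneg_left (hgron x hx) (by positivity)
    have hstep3 : (∫ x in d1..d2, C * lam⁻¹ * (|f lam d1| * E) * Real.exp (-lam * x))
        ≤ C * lam⁻¹ * (|f lam d1| * E) * (lam⁻¹ * Real.exp (-lam * d1)) := by
      rw [intervalIntegral.integral_const_mul]
      exact mul_le_mul_of_nonneg_left hEIle hKnn
    linarith
  -- bound the boundary term
  have hexp2 : Real.exp (-lam * d2) ≤ (lam ^ 2)⁻¹ * Real.exp (-lam * d1) := by
    have : Real.exp (-lam * d2) = Real.exp (-(lam * (d2 - d1))) * Real.exp (-lam * d1) := by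
      rw [← Real.exp_add]; ring_nf
    rw [this]
    apply mul_le_mul_of_nonneg_right _ (Real.exp_pos _).le
    rw [inv_eq_one_div, le_div_iff₀ (by positivity), mul_comm]
    exact h2
  have hfd2 : |f lam d2| ≤ |f lam d1| * E := hgron d2 ⟨hd12.le, le_rfl⟩
  -- final arithmetic
  have e1pos : 0 < Real.exp (-lam * d1) := Real.exp_pos _
  have e2pos : 0 < Real.exp (-lam * d2) := Real.exp_pos _
  have hinvnn : 0 ≤ lam⁻¹ := by positivity
  calc |lam⁻¹ * J - lam⁻¹ * (f lam d2 * Real.exp (-lam * d2))|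
      ≤ lam⁻¹ * |J| + lam⁻¹ * (|f lam d2| * Real.exp (-lam * d2)) := by
        refine (abs_sub _ _).trans ?_
        rw [abs_mul, abs_mul, abs_mul, abs_of_nonneg hinvnn, abs_of_pos e2pos]
    _ ≤ lam⁻¹ * (C * lam⁻¹ * (|f lam d1| * E) * (lam⁻¹ * Real.exp (-lam * d1)))
        + lam⁻¹ * ((|f lam d1| * E) * ((lam ^ 2)⁻¹ * Real.exp (-lam * d1))) := by
        exact add_le_add (mul_le_mul_of_nonneg_left habsJ hinvnn)
          (mul_le_mul_of_nonneg_left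
            (mul_le_mul hfd2 hexp2 e2pos.le (by positivity)) hinvnn)
    _ ≤ (E * (C + 1)) * (lam ^ 3)⁻¹ * |f lam d1| * Real.exp (-lam * d1) := by
        have hl3 : (lam:ℝ) ^ 3 ≠ 0 := by positivity
        have h1' : lam⁻¹ * (C * lam⁻¹ * (|f lam d1| * E) * (lam⁻¹ * Real.exp (-lam * d1)))
            = E * C * (lam ^ 3)⁻¹ * |f lam d1| * Real.exp (-lam * d1) := by
          field_simp
        have h2' : lam⁻¹ * ((|f lam d1| * E) * ((lam ^ 2)⁻¹ * Real.exp (-lam * d1)))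
            = E * (lam ^ 3)⁻¹ * |f lam d1| * Real.exp (-lam * d1) := by
          field_simp
        rw [h1', h2']
        exact le_of_eq (by ring)


theorem laplace_asymptotic_i (d1 d2 C : ℝ) (hd1 : 0 < d1) (hd12 : d1 < d2)
    (hC : 0 < C) (f f' : ℝ → ℝ → ℝ)
    (hderiv : ∀ lam : ℝ, 0 < lam → ∀ s : ℝ, d1 ≤ s → HasDerivAt (f lam) (f' lam s) s)
    (hcont : ∀ lam : ℝ, 0 < lam → ContinuousOn (f' lam) (Set.Ici d1))
    (hbound : ∀ lam : ℝ, 0 < lam → ∀ s : ℝ, d1 ≤ s →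
      |f' lam s| ≤ C * lam⁻¹ * |f lam s|) :
    ∃ C' Lam : ℝ, 0 < C' ∧ 0 < Lam ∧ ∀ lam : ℝ, Lam ≤ lam →
      |(∫ η in d1..d2, Real.exp (-lam * η) * f lam η)
          - lam⁻¹ * f lam d1 * Real.exp (-lam * d1)|
        ≤ C' * lam ^ (-(3 : ℝ)) * |f lam d1| * Real.exp (-lam * d1) := by
  have hδ : 0 < d2 - d1 := sub_pos.mpr hd12
  -- decay of lam^2 * exp(-(lam * (d2 - d1)))
  have hdecay : Filter.Tendsto (fun lam : ℝ => lam ^ 2 * Real.exp (-(lam * (d2 - d1))))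
      Filter.atTop (nhds 0) := by
    have h1 : Filter.Tendsto (fun lam : ℝ => (d2 - d1) * lam) Filter.atTop Filter.atTop :=
      Filter.Tendsto.const_mul_atTop hδ Filter.tendsto_id
    have h2 := (tendsto_pow_mul_exp_neg_atTop_nhds_zero 2).comp h1
    have h3 := h2.const_mul (((d2 - d1) ^ 2)⁻¹)
    rw [mul_zero] at h3
    convert h3 using 2 with lam
    simp only [Function.comp]
    rw [mul_pow]
    field_simp
  have hev : ∀ᶠ lam : ℝ in Filter.atTop,
      lam ^ 2 * Real.exp (-(lam * (d2 - d1))) ≤ 1 ∧ (1 : ℝ) ≤ lam :=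
    (hdecay.eventually_le_const one_pos).and (Filter.eventually_ge_atTop 1)
  obtain ⟨Lam0, hLam0⟩ := Filter.eventually_atTop.mp hev
  refine ⟨Real.exp (C * (d2 - d1)) * (C + 1), max Lam0 1, by positivity,
    lt_of_lt_of_le one_pos (le_max_right _ _), ?_⟩
  intro lam hlam
  obtain ⟨h2, h1⟩ := hLam0 lam ((le_max_left _ _).trans hlam)
  have hlampos : 0 < lam := lt_of_lt_of_le one_pos h1
  have hrpow : lam ^ (-(3 : ℝ)) = (lam ^ 3)⁻¹ := by
    rw [Real.rpow_neg hlampos.le, show ((3 : ℝ)) = ((3 : ℕ) : ℝ) by norm_num,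
      Real.rpow_natCast]
  rw [hrpow]
  exact key_estimate d1 d2 C hd1 hd12 hC f f' hderiv hcont hbound lam h1 h2
end

section
/- Let $0 < \delta_1 < \delta_2$ and let $f_\lambda \in C^1[\delta_1, \infty)$ satisfy $|\partial_s f_\lambda(s)| \le C\lambda^{-1}|f_\lambda(s)|$ for all $s \ge \delta_1$, with $C$ independent of $\lambda > 0$. Then $\int_{\delta_1}^{\delta_2} e^{-\lambda\eta}(\eta - \delta_1)^{-1/2} f_\lambda(\eta)\,d\eta = \pi^{1/2}\lambda^{-1/2} f_\lambda(\delta_1) e^{-\lambda\delta_1} + O(\lambda^{-5/2} f_\lambda(\delta_1) e^{-\lambda\delta_1})$ as $\lambda \to \infty$. -/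
open Real MeasureTheory intervalIntegral

lemma hlp_integral (lam p : ℝ) (hlam : 0 < lam) (hp : 0 < p) :
    ∫ t in Set.Ioi (0:ℝ), Real.exp (-lam * t) * t ^ (p - 1) = lam ^ (-p) * Real.Gamma p := by
  have h := Real.integral_rpow_mul_exp_neg_mul_Ioi hp hlam
  have h1 : ((1:ℝ)/lam) ^ p = lam ^ (-p) := by
    rw [one_div, ← Real.rpow_neg_one lam, ← Real.rpow_mul hlam.le]
    ring_nf
  rw [h1] at h
  rw [← h]
  simp_rw [neg_mul, mul_comm]

lemma hlp_integrable (lam s : ℝ) (hlam : 0 < lam) (hs : -1 < s) :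
    IntegrableOn (fun t : ℝ => Real.exp (-lam * t) * t ^ s) (Set.Ioi 0) := by
  have h := integrableOn_rpow_mul_exp_neg_mul_rpow (p := 1) hs one_pos hlam
  refine h.congr_fun (fun x hx => ?_) measurableSet_Ioi
  beta_reduce
  rw [Real.rpow_one, mul_comm]

lemma hlp_exp_sq (x : ℝ) (hx : 0 < x) : Real.exp (-x) ≤ 4 / x ^ 2 := by
  have h := Real.add_one_le_exp (x/2)
  have h2 : Real.exp (x/2) * Real.exp (x/2) = Real.exp x := by
    rw [← Real.exp_add]; ring_nf
  have hx2 : x^2 / 4 ≤ Real.exp x := by nlinarith [Real.exp_pos (x/2)]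
  rw [Real.exp_neg, inv_le_comm₀ (Real.exp_pos x) (by positivity), inv_div]
  linarith

theorem laplace_asymptotic_ii (d1 d2 C : ℝ) (hd1 : 0 < d1) (hd12 : d1 < d2)
    (hC : 0 < C) (f f' : ℝ → ℝ → ℝ)
    (hderiv : ∀ lam : ℝ, 0 < lam → ∀ s : ℝ, d1 ≤ s → HasDerivAt (f lam) (f' lam s) s)
    (hcont : ∀ lam : ℝ, 0 < lam → ContinuousOn (f' lam) (Set.Ici d1))
    (hbound : ∀ lam : ℝ, 0 < lam → ∀ s : ℝ, d1 ≤ s →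
      |f' lam s| ≤ C * lam⁻¹ * |f lam s|) :
    ∃ C' Lam : ℝ, 0 < C' ∧ 0 < Lam ∧ ∀ lam : ℝ, Lam ≤ lam →
      |(∫ η in d1..d2, Real.exp (-lam * η) * (η - d1) ^ (-(1 : ℝ) / 2) * f lam η)
          - Real.sqrt Real.pi * lam ^ (-(1 : ℝ) / 2) * f lam d1 * Real.exp (-lam * d1)|
        ≤ C' * lam ^ (-(5 : ℝ) / 2) * |f lam d1| * Real.exp (-lam * d1) := by
  set a : ℝ := d2 - d1 with ha_def
  have ha : 0 < a := by simp only [ha_def]; linarith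
  have hΓ : 0 < Real.Gamma (3/2) := Real.Gamma_pos_of_pos (by norm_num)
  set M : ℝ := Real.exp (C * a) with hM_def
  have hM1 : 1 ≤ M := by
    rw [hM_def, ← Real.exp_zero]
    exact Real.exp_le_exp.mpr (by positivity)
  have hM0 : 0 < M := lt_of_lt_of_le one_pos hM1
  refine ⟨C * M * Real.Gamma (3/2) + 4 / (Real.sqrt a * a ^ 2), 1, ?_, one_pos, ?_⟩
  · have h1 : 0 < C * M * Real.Gamma (3/2) := by positivity
    have h2 : 0 < 4 / (Real.sqrt a * a ^ 2) := by positivity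
    linarith
  intro lam hlam
  have hlam0 : 0 < lam := lt_of_lt_of_le one_pos hlam
  have hfc : ContinuousOn (f lam) (Set.Ici d1) :=
    fun s hs => (hderiv lam hlam0 s hs).continuousAt.continuousWithinAt
  -- Gronwall bound
  have hgron : ∀ s ∈ Set.Icc d1 d2, |f lam s| ≤ M * |f lam d1| := by
    have h := norm_le_gronwallBound_of_norm_deriv_right_le (f := f lam) (f' := f' lam)
      (δ := ‖f lam d1‖) (K := C * lam⁻¹) (ε := 0) (a := d1) (b := d2)
      (hfc.mono Set.Icc_subset_Ici_self)
      (fun x hx => (hderiv lam hlam0 x hx.1).hasDerivWithinAt)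
      le_rfl
      (fun x hx => by
        rw [Real.norm_eq_abs, Real.norm_eq_abs, add_zero]
        exact hbound lam hlam0 x hx.1)
    intro s hs
    have h2 := h s hs
    rw [gronwallBound_ε0, Real.norm_eq_abs, Real.norm_eq_abs] at h2
    refine h2.trans ?_
    have hinv : lam⁻¹ ≤ 1 := inv_le_one_of_one_le₀ hlam
    have hexpo : Real.exp (C * lam⁻¹ * (s - d1)) ≤ M := by
      rw [hM_def]
      apply Real.exp_le_exp.mpr
      have h5 : 0 ≤ s - d1 := by linarith [hs.1]
      have h6 : s - d1 ≤ a := by rw [ha_def]; linarith [hs.2]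
      nlinarith [hC.le, mul_nonneg hC.le h5]
    rw [mul_comm M]
    exact mul_le_mul_of_nonneg_left hexpo (abs_nonneg _)
  -- difference bound via MVT
  have hdiff : ∀ t ∈ Set.Icc d1 d2,
      |f lam t - f lam d1| ≤ C * lam⁻¹ * (M * |f lam d1|) * (t - d1) := by
    intro t ht
    rcases eq_or_lt_of_le ht.1 with h | h
    · rw [← h]
      simp
    · obtain ⟨c, hc, hceq⟩ := exists_hasDerivAt_eq_slope (f lam) (f' lam) h
        (hfc.mono Set.Icc_subset_Ici_self)
        (fun x hx => hderiv lam hlam0 x hx.1.le)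
      have hcmem : c ∈ Set.Icc d1 d2 := ⟨hc.1.le, hc.2.le.trans ht.2⟩
      have hb := hbound lam hlam0 c hc.1.le
      have hgc' := hgron c hcmem
      have heq : f lam t - f lam d1 = f' lam c * (t - d1) := by
        rw [hceq, div_mul_cancel₀]
        exact ne_of_gt (sub_pos.mpr h)
      rw [heq, abs_mul, abs_of_pos (sub_pos.mpr h)]
      have hfin : |f' lam c| ≤ C * lam⁻¹ * (M * |f lam d1|) :=
        hb.trans (mul_le_mul_of_nonneg_left hgc' (by positivity))
      exact mul_le_mul_of_nonneg_right hfin (by linarith [ht.1])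
  -- integrability facts
  have hG0 : IntegrableOn (fun t : ℝ => Real.exp (-lam * t) * t ^ (-(1:ℝ)/2)) (Set.Ioi 0) := by
    have := hlp_integrable lam (-(1:ℝ)/2) hlam0 (by norm_num)
    exact this
  have hG1 : IntegrableOn (fun t : ℝ => Real.exp (-lam * t) * t ^ ((1:ℝ)/2)) (Set.Ioi 0) := by
    have := hlp_integrable lam ((1:ℝ)/2) hlam0 (by norm_num)
    exact this
  have hGIoc : IntegrableOn (fun t : ℝ => Real.exp (-lam * t) * t ^ (-(1:ℝ)/2)) (Set.Ioc 0 a) :=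
    hG0.mono_set Set.Ioc_subset_Ioi_self
  have hGIoi : IntegrableOn (fun t : ℝ => Real.exp (-lam * t) * t ^ (-(1:ℝ)/2)) (Set.Ioi a) :=
    hG0.mono_set (Set.Ioi_subset_Ioi ha.le)
  have hgc : ContinuousOn (fun t : ℝ => f lam (t + d1)) (Set.Icc 0 a) := by
    refine hfc.comp ((continuous_id.add continuous_const).continuousOn) (fun t ht => ?_)
    simp only [Set.mem_Ici]
    linarith [ht.1]
  have hΔint : IntegrableOn
      (fun t : ℝ => Real.exp (-lam * t) * t ^ (-(1:ℝ)/2) * (f lam (t + d1) - f lam d1))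
      (Set.Ioc 0 a) := by
    exact hGIoc.mul_continuousOn_of_subset (hgc.sub continuousOn_const) measurableSet_Ioc
      isCompact_Icc Set.Ioc_subset_Icc_self
  have hJint : IntegrableOn
      (fun t : ℝ => Real.exp (-lam * t) * t ^ (-(1:ℝ)/2) * f lam (t + d1)) (Set.Ioc 0 a) := by
    exact hGIoc.mul_continuousOn_of_subset hgc measurableSet_Ioc isCompact_Icc
      Set.Ioc_subset_Icc_self
  -- the Gamma-integral identities
  have hid : ∫ t in Set.Ioi (0:ℝ), Real.exp (-lam * t) * t ^ (-(1:ℝ)/2)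
      = Real.sqrt Real.pi * lam ^ (-(1:ℝ)/2) := by
    have h := hlp_integral lam (1/2) hlam0 (by norm_num)
    rw [Real.Gamma_one_half_eq] at h
    rw [show (-(1:ℝ)/2) = (1/2:ℝ) - 1 by norm_num, h, mul_comm]
    norm_num
  have hid1 : ∫ t in Set.Ioi (0:ℝ), Real.exp (-lam * t) * t ^ ((1:ℝ)/2)
      = lam ^ (-(3:ℝ)/2) * Real.Gamma (3/2) := by
    have h := hlp_integral lam (3/2) hlam0 (by norm_num)
    rw [show ((1:ℝ)/2) = (3/2:ℝ) - 1 by norm_num, h]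
    norm_num
  -- split the Ioi-integral
  have hunion : ∫ t in Set.Ioi (0:ℝ), Real.exp (-lam * t) * t ^ (-(1:ℝ)/2)
      = (∫ t in Set.Ioc (0:ℝ) a, Real.exp (-lam * t) * t ^ (-(1:ℝ)/2))
        + ∫ t in Set.Ioi a, Real.exp (-lam * t) * t ^ (-(1:ℝ)/2) := by
    rw [← Set.Ioc_union_Ioi_eq_Ioi ha.le,
      MeasureTheory.setIntegral_union (Set.Ioc_disjoint_Ioi le_rfl) measurableSet_Ioi hGIoc hGIoi]
  -- change of variables on the LHS
  have hcv : (∫ η in d1..d2, Real.exp (-lam * η) * (η - d1) ^ (-(1:ℝ)/2) * f lam η)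
      = Real.exp (-lam * d1) *
        ∫ t in Set.Ioc (0:ℝ) a, Real.exp (-lam * t) * t ^ (-(1:ℝ)/2) * f lam (t + d1) := by
    have h1 := intervalIntegral.integral_comp_add_right (a := (0:ℝ)) (b := a)
      (fun η => Real.exp (-lam * η) * (η - d1) ^ (-(1:ℝ)/2) * f lam η) d1
    rw [zero_add, show a + d1 = d2 by rw [ha_def]; ring] at h1
    rw [← h1, intervalIntegral.integral_of_le ha.le, ← MeasureTheory.integral_const_mul]
    refine MeasureTheory.setIntegral_congr_fun measurableSet_Ioc (fun t ht => ?_)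
    simp only [add_sub_cancel_right]
    rw [show -lam * (t + d1) = -lam * d1 + -lam * t by ring, Real.exp_add]
    ring
  -- main estimate
  have key : |(∫ t in Set.Ioc (0:ℝ) a, Real.exp (-lam * t) * t ^ (-(1:ℝ)/2) * f lam (t + d1))
      - Real.sqrt Real.pi * lam ^ (-(1:ℝ)/2) * f lam d1|
      ≤ (C * M * Real.Gamma (3/2) + 4 / (Real.sqrt a * a ^ 2)) * lam ^ (-(5:ℝ)/2)
        * |f lam d1| := by
    set c0 := f lam d1 with hc0
    set T2 : ℝ := ∫ t in Set.Ioi a, Real.exp (-lam * t) * t ^ (-(1:ℝ)/2) with hT2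
    set S1 : ℝ := ∫ t in Set.Ioc (0:ℝ) a,
      Real.exp (-lam * t) * t ^ (-(1:ℝ)/2) * (f lam (t + d1) - c0) with hS1
    have hp1 : lam⁻¹ * lam ^ (-(3:ℝ)/2) = lam ^ (-(5:ℝ)/2) := by
      rw [← Real.rpow_neg_one lam, ← Real.rpow_add hlam0]
      norm_num
    have hsub : S1 = (∫ t in Set.Ioc (0:ℝ) a,
        Real.exp (-lam * t) * t ^ (-(1:ℝ)/2) * f lam (t + d1))
        - (∫ t in Set.Ioc (0:ℝ) a, Real.exp (-lam * t) * t ^ (-(1:ℝ)/2)) * c0 := by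
      rw [hS1]
      simp_rw [mul_sub]
      rw [MeasureTheory.integral_sub hJint (hGIoc.mul_const _),
        MeasureTheory.integral_mul_const]
    have hdecomp : (∫ t in Set.Ioc (0:ℝ) a,
        Real.exp (-lam * t) * t ^ (-(1:ℝ)/2) * f lam (t + d1))
        - Real.sqrt Real.pi * lam ^ (-(1:ℝ)/2) * c0 = S1 - c0 * T2 := by
      rw [hsub]
      rw [show Real.sqrt Real.pi * lam ^ (-(1:ℝ)/2) * c0
        = (Real.sqrt Real.pi * lam ^ (-(1:ℝ)/2)) * c0 by ring, ← hid, hunion]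
      ring
    -- bound on S1
    have hA : |S1| ≤ C * M * Real.Gamma (3/2) * lam ^ (-(5:ℝ)/2) * |c0| := by
      have habs : |S1| ≤ ∫ t in Set.Ioc (0:ℝ) a,
          |Real.exp (-lam * t) * t ^ (-(1:ℝ)/2) * (f lam (t + d1) - c0)| := by
        rw [hS1]
        have := MeasureTheory.norm_integral_le_integral_norm
          (μ := MeasureTheory.volume.restrict (Set.Ioc (0:ℝ) a))
          (f := fun t => Real.exp (-lam * t) * t ^ (-(1:ℝ)/2) * (f lam (t + d1) - c0))
        simp only [Real.norm_eq_abs] at this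
        exact this
      have hmono : (∫ t in Set.Ioc (0:ℝ) a,
          |Real.exp (-lam * t) * t ^ (-(1:ℝ)/2) * (f lam (t + d1) - c0)|)
          ≤ ∫ t in Set.Ioc (0:ℝ) a,
            (C * lam⁻¹ * (M * |c0|)) * (Real.exp (-lam * t) * t ^ ((1:ℝ)/2)) := by
        refine MeasureTheory.setIntegral_mono_on hΔint.abs
          ((hG1.mono_set Set.Ioc_subset_Ioi_self).const_mul _) measurableSet_Ioc ?_
        intro t ht
        have ht0 : 0 < t := ht.1
        have htd : t + d1 ∈ Set.Icc d1 d2 := by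
          constructor
          · linarith
          · have := ht.2
            rw [ha_def] at this
            linarith
        have hd := hdiff (t + d1) htd
        rw [add_sub_cancel_right] at hd
        have hGnn : 0 ≤ Real.exp (-lam * t) * t ^ (-(1:ℝ)/2) := by positivity
        rw [abs_mul, abs_of_nonneg hGnn]
        have hstep := mul_le_mul_of_nonneg_left hd hGnn
        refine hstep.trans (le_of_eq ?_)
        have hrp : t ^ (-(1:ℝ)/2) * t = t ^ ((1:ℝ)/2) := by
          nth_rewrite 2 [← Real.rpow_one t]
          rw [← Real.rpow_add ht0]
          norm_num
        rw [← hrp]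
        ring
      have hlast : (∫ t in Set.Ioc (0:ℝ) a,
          (C * lam⁻¹ * (M * |c0|)) * (Real.exp (-lam * t) * t ^ ((1:ℝ)/2)))
          ≤ (C * lam⁻¹ * (M * |c0|)) * (lam ^ (-(3:ℝ)/2) * Real.Gamma (3/2)) := by
        rw [MeasureTheory.integral_const_mul, ← hid1]
        refine mul_le_mul_of_nonneg_left ?_
          (mul_nonneg (mul_nonneg hC.le (inv_nonneg.2 hlam0.le))
            (mul_nonneg hM0.le (abs_nonneg _)))
        refine MeasureTheory.setIntegral_mono_set hG1 ?_ ?_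
        · refine (MeasureTheory.ae_restrict_iff' measurableSet_Ioi).mpr
            (Filter.Eventually.of_forall (fun x hx => ?_))
          have hx0 : (0:ℝ) < x := hx
          positivity
        · exact Filter.Eventually.of_forall (fun x hx => Set.Ioc_subset_Ioi_self hx)
      calc |S1| ≤ (C * lam⁻¹ * (M * |c0|)) * (lam ^ (-(3:ℝ)/2) * Real.Gamma (3/2)) :=
            habs.trans (hmono.trans hlast)
        _ = C * M * Real.Gamma (3/2) * (lam⁻¹ * lam ^ (-(3:ℝ)/2)) * |c0| := by ring
        _ = C * M * Real.Gamma (3/2) * lam ^ (-(5:ℝ)/2) * |c0| := by rw [hp1]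
    -- bound on T2
    have hT2nn : 0 ≤ T2 := by
      rw [hT2]
      refine MeasureTheory.setIntegral_nonneg measurableSet_Ioi (fun t ht => ?_)
      have ht0 : (0:ℝ) < t := lt_trans ha ht
      positivity
    have hsqa : a ^ (-(1:ℝ)/2) = (Real.sqrt a)⁻¹ := by
      rw [Real.sqrt_eq_rpow, ← Real.rpow_neg ha.le]
      norm_num
    have hT2le : T2 ≤ (Real.sqrt a)⁻¹ * (lam⁻¹ * Real.exp (-(lam * a))) := by
      have hstep : T2 ≤ ∫ t in Set.Ioi a, a ^ (-(1:ℝ)/2) * Real.exp (-lam * t) := by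
        rw [hT2]
        refine MeasureTheory.setIntegral_mono_on hGIoi
          ((exp_neg_integrableOn_Ioi a hlam0).const_mul _) measurableSet_Ioi ?_
        intro t ht
        have h7 : t ^ (-(1:ℝ)/2) ≤ a ^ (-(1:ℝ)/2) :=
          Real.rpow_le_rpow_of_nonpos ha (le_of_lt ht) (by norm_num)
        calc Real.exp (-lam * t) * t ^ (-(1:ℝ)/2)
            ≤ Real.exp (-lam * t) * a ^ (-(1:ℝ)/2) :=
              mul_le_mul_of_nonneg_left h7 (Real.exp_pos _).le
          _ = a ^ (-(1:ℝ)/2) * Real.exp (-lam * t) := mul_comm _ _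
      rw [MeasureTheory.integral_const_mul] at hstep
      have hexpint : (∫ t in Set.Ioi a, Real.exp (-lam * t)) = lam⁻¹ * Real.exp (-(lam * a)) := by
        have h8 := MeasureTheory.integral_comp_mul_left_Ioi (fun x => Real.exp (-x)) a hlam0
        rw [integral_exp_neg_Ioi] at h8
        simp only [smul_eq_mul] at h8
        rw [← h8]
        simp_rw [neg_mul]
      rw [hexpint, hsqa] at hstep
      exact hstep
    have htail : lam⁻¹ * Real.exp (-(lam * a)) ≤ 4 / a ^ 2 * lam ^ (-(5:ℝ)/2) := by
      have h4 := hlp_exp_sq (lam * a) (by positivity)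
      have hl3 : lam⁻¹ * (4 / (lam * a) ^ 2) = 4 / a ^ 2 * lam ^ (-(3:ℝ)) := by
        rw [show lam ^ (-(3:ℝ)) = (lam ^ (3:ℕ))⁻¹ by
          rw [← Real.rpow_natCast lam 3, ← Real.rpow_neg hlam0.le]
          norm_num]
        field_simp
      have hl4 : lam ^ (-(3:ℝ)) ≤ lam ^ (-(5:ℝ)/2) :=
        Real.rpow_le_rpow_of_exponent_le hlam (by norm_num)
      calc lam⁻¹ * Real.exp (-(lam * a)) ≤ lam⁻¹ * (4 / (lam * a) ^ 2) :=
            mul_le_mul_of_nonneg_left h4 (by positivity)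
        _ = 4 / a ^ 2 * lam ^ (-(3:ℝ)) := hl3
        _ ≤ 4 / a ^ 2 * lam ^ (-(5:ℝ)/2) := mul_le_mul_of_nonneg_left hl4 (by positivity)
    have hB : |c0| * T2 ≤ 4 / (Real.sqrt a * a ^ 2) * lam ^ (-(5:ℝ)/2) * |c0| := by
      have h9 : T2 ≤ 4 / (Real.sqrt a * a ^ 2) * lam ^ (-(5:ℝ)/2) := by
        refine hT2le.trans ?_
        calc (Real.sqrt a)⁻¹ * (lam⁻¹ * Real.exp (-(lam * a)))
            ≤ (Real.sqrt a)⁻¹ * (4 / a ^ 2 * lam ^ (-(5:ℝ)/2)) :=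
              mul_le_mul_of_nonneg_left htail (by positivity)
          _ = 4 / (Real.sqrt a * a ^ 2) * lam ^ (-(5:ℝ)/2) := by
              rw [div_mul_eq_mul_div, div_mul_eq_mul_div]
              rw [eq_div_iff (by positivity)]
              field_simp
      calc |c0| * T2 ≤ |c0| * (4 / (Real.sqrt a * a ^ 2) * lam ^ (-(5:ℝ)/2)) :=
            mul_le_mul_of_nonneg_left h9 (abs_nonneg _)
        _ = 4 / (Real.sqrt a * a ^ 2) * lam ^ (-(5:ℝ)/2) * |c0| := by ring
    rw [hdecomp]
    have htri : |S1 - c0 * T2| ≤ |S1| + |c0 * T2| := abs_sub _ _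
    rw [abs_mul, abs_of_nonneg hT2nn] at htri
    have hring : (C * M * Real.Gamma (3/2) + 4 / (Real.sqrt a * a ^ 2)) * lam ^ (-(5:ℝ)/2) * |c0|
        = C * M * Real.Gamma (3/2) * lam ^ (-(5:ℝ)/2) * |c0|
          + 4 / (Real.sqrt a * a ^ 2) * lam ^ (-(5:ℝ)/2) * |c0| := by ring
    rw [hring]
    linarith
  -- conclude
  rw [hcv]
  have hexp : (0:ℝ) < Real.exp (-lam * d1) := Real.exp_pos _
  calc |Real.exp (-lam * d1) * (∫ t in Set.Ioc (0:ℝ) a,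
          Real.exp (-lam * t) * t ^ (-(1:ℝ)/2) * f lam (t + d1))
        - Real.sqrt Real.pi * lam ^ (-(1:ℝ)/2) * f lam d1 * Real.exp (-lam * d1)|
      = Real.exp (-lam * d1) * |(∫ t in Set.Ioc (0:ℝ) a,
          Real.exp (-lam * t) * t ^ (-(1:ℝ)/2) * f lam (t + d1))
          - Real.sqrt Real.pi * lam ^ (-(1:ℝ)/2) * f lam d1| := by
        have h3 : ∀ (e X Y : ℝ), 0 < e → |e * X - Y * e| = e * |X - Y| := by
          intro e X Y he
          rw [show e * X - Y * e = e * (X - Y) by ring, abs_mul, abs_of_pos he]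
        exact h3 _ _ _ hexp
    _ ≤ Real.exp (-lam * d1) * ((C * M * Real.Gamma (3/2) + 4 / (Real.sqrt a * a ^ 2))
          * lam ^ (-(5:ℝ)/2) * |f lam d1|) := by
        exact mul_le_mul_of_nonneg_left key hexp.le
    _ = (C * M * Real.Gamma (3/2) + 4 / (Real.sqrt a * a ^ 2)) * lam ^ (-(5:ℝ)/2)
          * |f lam d1| * Real.exp (-lam * d1) := by ring
end
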